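/- arXiv:1801.06358 — 2 statements merged into one kernel-verified Lean document; each statement's English description precedes it below -/
import Mathlib

section
/- Suppose x ∈ R^N is k-sparse and there exists q with 1 < q < ∞ such that k < 2^{q/(1-q)} s_q(z) for all nonzero z in the kernel of A ∈ R^{m×N}. Then x is the unique minimizer of ‖z‖₁ subject to Az = Ax. -/
open Finset Matrix

noncomputable def l1 {N : ℕ} (z : Fin N → ℝ) : ℝ := ∑ i, |z i|
noncomputable def lq {N : ℕ} (q : ℝ) (z : Fin N → ℝ) : ℝ := (∑ i, |z i| ^ q) ^ (1/q)
noncomputable def l2 {m : ℕ} (v : Fin m → ℝ) : ℝ := Real.sqrt (∑ i, (v i)^2)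
noncomputable def linf {N : ℕ} (z : Fin N → ℝ) : ℝ := ⨆ i, |z i|
open scoped Classical in
noncomputable def l0 {N : ℕ} (z : Fin N → ℝ) : ℕ := (Finset.univ.filter (fun i => z i ≠ 0)).card
noncomputable def sparsityQ {N : ℕ} (q : ℝ) (z : Fin N → ℝ) : ℝ := (l1 z / lq q z) ^ (q/(q-1))
noncomputable def cmsv {m N : ℕ} (q s : ℝ) (A : Matrix (Fin m) (Fin N) ℝ) : ℝ :=
  sInf { r | ∃ z : Fin N → ℝ, z ≠ 0 ∧ sparsityQ q z ≤ s ∧ r = l2 (A.mulVec z) / lq q z }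

/-!
With `h = z - x` in the kernel of `A` and `S` the support of `x`, Hölder's inequality gives
`‖h_S‖₁ ≤ |S| ^ (1 - 1/q) ‖h‖_q ≤ k ^ (1 - 1/q) ‖h‖_q`, while taking the `(q - 1)/q`-th power of
the hypothesis `k < 2 ^ (q/(1-q)) s_q(h)` gives `2 k ^ (1 - 1/q) ‖h‖_q < ‖h‖₁`. Hence
`2 ‖h_S‖₁ < ‖h‖₁` (the null space property), and the coordinatewise triangle inequality
`‖x + h‖₁ ≥ ‖x‖₁ + ‖h‖₁ - 2 ‖h_S‖₁` finishes the proof.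
-/

lemma lq_pos {N : ℕ} (q : ℝ) {h : Fin N → ℝ} (hh : h ≠ 0) : 0 < lq q h := by
  obtain ⟨i, hi⟩ := Function.ne_iff.mp hh
  refine Real.rpow_pos_of_pos (sum_pos' (fun j _ => by positivity) ⟨i, mem_univ i, ?_⟩) _
  exact Real.rpow_pos_of_pos (abs_pos.mpr hi) q

lemma sum_abs_le_card_rpow_mul_lq {N : ℕ} {q : ℝ} (hq : 1 < q) (S : Finset (Fin N))
    (h : Fin N → ℝ) : ∑ i ∈ S, |h i| ≤ (#S : ℝ) ^ ((q - 1) / q) * lq q h := by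
  have hholder := Real.inner_le_Lp_mul_Lq_of_nonneg (s := S)
    (Real.HolderConjugate.conjExponent hq).symm (f := fun _ => (1 : ℝ)) (g := fun i => |h i|)
    (fun _ _ => zero_le_one) (fun _ _ => abs_nonneg _)
  simp only [one_mul, Real.one_rpow, sum_const, nsmul_eq_mul, mul_one, Real.conjExponent,
    one_div_div] at hholder
  refine hholder.trans ?_
  unfold lq
  gcongr
  exact subset_univ S

lemma two_mul_rpow_mul_lq_lt_l1_of_lt_sparsityQ {N : ℕ} {q k : ℝ} (hq : 1 < q) (hk : 0 ≤ k)
    {h : Fin N → ℝ} (hh : h ≠ 0) (hlt : k < (2 : ℝ) ^ (q / (1 - q)) * sparsityQ q h) :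
    2 * k ^ ((q - 1) / q) * lq q h < l1 h := by
  have hr : 0 < q / (q - 1) := div_pos (by linarith) (by linarith)
  have hl1lq : 0 ≤ l1 h / lq q h := div_nonneg (sum_nonneg fun _ _ => abs_nonneg _) (lq_pos q hh).le
  have htwo : (2 : ℝ) ^ (q / (1 - q)) = ((2 : ℝ) ^ (q / (q - 1)))⁻¹ := by
    rw [← Real.rpow_neg zero_le_two, ← div_neg, neg_sub]
  rw [sparsityQ, htwo, inv_mul_eq_div, ← Real.div_rpow hl1lq zero_le_two,
    ← Real.rpow_inv_lt_iff_of_pos hk (by positivity) hr, inv_div,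
    lt_div_iff₀ two_pos, lt_div_iff₀ (lq_pos q hh)] at hlt
  linarith

lemma l1_sub_two_mul_sum_le_l1_add {N : ℕ} (S : Finset (Fin N)) {x : Fin N → ℝ}
    (hS : ∀ i ∉ S, x i = 0) (h : Fin N → ℝ) :
    l1 x + l1 h - 2 * ∑ i ∈ S, |h i| ≤ l1 (x + h) := by
  have hcoord : ∀ i, |x i| + |h i| - 2 * (if i ∈ S then |h i| else 0) ≤ |x i + h i| := by
    intro i
    split_ifs with hi
    · have := abs_sub_abs_le_abs_sub (x i) (-h i)
      rw [abs_neg, sub_neg_eq_add] at this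
      linarith
    · simp [hS i hi]
  calc l1 x + l1 h - 2 * ∑ i ∈ S, |h i|
      = ∑ i, (|x i| + |h i| - 2 * (if i ∈ S then |h i| else 0)) := by
        rw [sum_sub_distrib, sum_add_distrib, ← mul_sum, sum_ite_mem, univ_inter]; rfl
    _ ≤ l1 (x + h) := sum_le_sum fun i _ => hcoord i

theorem stmt4 {m N k : ℕ} (A : Matrix (Fin m) (Fin N) ℝ) (x : Fin N → ℝ)
    (hx : l0 x ≤ k) (q : ℝ) (hq : 1 < q)
    (hker : ∀ z : Fin N → ℝ, z ≠ 0 → A.mulVec z = 0 →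
      (k : ℝ) < (2:ℝ) ^ (q/(1-q)) * sparsityQ q z) :
    ∀ z : Fin N → ℝ, A.mulVec z = A.mulVec x → z ≠ x → l1 x < l1 z := by
  intro z hAz hzx
  set S := univ.filter (fun i => x i ≠ 0)
  set h := z - x
  have hh : h ≠ 0 := sub_ne_zero.mpr hzx
  have hS : ∀ i ∉ S, x i = 0 := by simp [S]
  have hcard : (#S : ℝ) ≤ k := by
    unfold l0 at hx
    exact_mod_cast (by convert hx : #S ≤ k)
  have hnull := two_mul_rpow_mul_lq_lt_l1_of_lt_sparsityQ hq k.cast_nonneg hh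
    (hker h hh (by simp [h, mulVec_sub, hAz]))
  have hsupport : ∑ i ∈ S, |h i| ≤ (k : ℝ) ^ ((q - 1) / q) * lq q h :=
    (sum_abs_le_card_rpow_mul_lq hq S h).trans <| mul_le_mul_of_nonneg_right
      (Real.rpow_le_rpow (by positivity) hcard (div_nonneg (by linarith) (by linarith)))
      (lq_pos q hh).le
  calc l1 x < l1 x + l1 h - 2 * ∑ i ∈ S, |h i| := by linarith
    _ ≤ l1 (x + h) := l1_sub_two_mul_sum_le_l1_add S hS h
    _ = l1 z := by simp [h]
end

section
/- If x̂ minimizes the Lasso objective (1/2)‖y − Az‖₂² + λσ‖z‖₁ and the noise w = y − Ax satisfies ‖Aᵀw‖_∞ ≤ κλσ for some κ ∈ (0,1), then ‖x̂‖₁ ≤ κ‖x̂ − x‖₁ + ‖x‖₁. -/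
open Finset Matrix

/-! Comparing the Lasso objective at `xh` and at `x` and expanding the squares gives the basic
inequality `½‖A(xh - x)‖₂² + λ‖xh‖₁ ≤ ⟨Aᵀw, xh - x⟩ + λ‖x‖₁`; Hölder bounds the inner product by
`‖Aᵀw‖_∞ ‖xh - x‖₁ ≤ κλ ‖xh - x‖₁`, and dividing by `λ` gives the claim. -/

section Norms

variable {n : ℕ}

lemma l1_nonneg (z : Fin n → ℝ) : 0 ≤ l1 z :=
  Finset.sum_nonneg fun i _ => abs_nonneg (z i)

lemma l2_sq (v : Fin n → ℝ) : l2 v ^ 2 = v ⬝ᵥ v := by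
  rw [l2, Real.sq_sqrt (Finset.sum_nonneg fun i _ => sq_nonneg (v i))]
  exact Finset.sum_congr rfl fun i _ => sq (v i)

lemma l2_sub_sq (u v : Fin n → ℝ) :
    l2 (u - v) ^ 2 = l2 u ^ 2 - 2 * (u ⬝ᵥ v) + l2 v ^ 2 := by
  simp only [l2_sq, sub_dotProduct, dotProduct_sub, dotProduct_comm v u]
  ring

lemma abs_le_linf (z : Fin n → ℝ) (i : Fin n) : |z i| ≤ linf z :=
  le_ciSup (Set.finite_range fun j => |z j|).bddAbove i

lemma dotProduct_le_linf_mul_l1 (u v : Fin n → ℝ) : u ⬝ᵥ v ≤ linf u * l1 v := by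
  rw [l1, Finset.mul_sum]
  refine Finset.sum_le_sum fun i _ => ?_
  calc u i * v i ≤ |u i| * |v i| := by rw [← abs_mul]; exact le_abs_self _
    _ ≤ linf u * |v i| := mul_le_mul_of_nonneg_right (abs_le_linf u i) (abs_nonneg _)

end Norms

lemma lasso_basic_inequality {m N : ℕ} (A : Matrix (Fin m) (Fin N) ℝ) (xh : Fin N → ℝ)
    (y : Fin m → ℝ) (lam : ℝ)
    (hmin : ∀ z : Fin N → ℝ,
      (1/2) * (l2 (y - A.mulVec xh))^2 + lam * l1 xh ≤
        (1/2) * (l2 (y - A.mulVec z))^2 + lam * l1 z)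
    (z : Fin N → ℝ) :
    (1/2) * l2 (A *ᵥ (xh - z)) ^ 2 + lam * l1 xh ≤
      (Aᵀ *ᵥ (y - A *ᵥ z)) ⬝ᵥ (xh - z) + lam * l1 z := by
  have hres : y - A *ᵥ xh = (y - A *ᵥ z) - A *ᵥ (xh - z) := by
    rw [mulVec_sub]; abel
  have hadj : (y - A *ᵥ z) ⬝ᵥ A *ᵥ (xh - z) = (Aᵀ *ᵥ (y - A *ᵥ z)) ⬝ᵥ (xh - z) := by
    rw [dotProduct_mulVec, mulVec_transpose]
  have := hmin z
  rw [hres, l2_sub_sq, hadj] at this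
  linarith

theorem stmt15_general {m N : ℕ} (A : Matrix (Fin m) (Fin N) ℝ)
    (x xh : Fin N → ℝ) (w y : Fin m → ℝ) (lam κ : ℝ)
    (hlam : 0 < lam)
    (hy : y = A.mulVec x + w) (hw : linf (A.transpose.mulVec w) ≤ κ * lam)
    (hmin : ∀ z : Fin N → ℝ,
      (1/2) * (l2 (y - A.mulVec xh))^2 + lam * l1 xh ≤
        (1/2) * (l2 (y - A.mulVec z))^2 + lam * l1 z) :
    l1 xh ≤ κ * l1 (xh - x) + l1 x := by
  have hbasic := lasso_basic_inequality A xh y lam hmin x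
  rw [hy, add_sub_cancel_left] at hbasic
  have hnoise : (Aᵀ *ᵥ w) ⬝ᵥ (xh - x) ≤ κ * lam * l1 (xh - x) :=
    (dotProduct_le_linf_mul_l1 _ _).trans
      (mul_le_mul_of_nonneg_right hw (l1_nonneg _))
  have hscaled : lam * l1 xh ≤ lam * (κ * l1 (xh - x) + l1 x) := by
    linarith [sq_nonneg (l2 (A *ᵥ (xh - x)))]
  exact le_of_mul_le_mul_left hscaled hlam

theorem stmt15 {m N : ℕ} (A : Matrix (Fin m) (Fin N) ℝ)
    (x xh : Fin N → ℝ) (w y : Fin m → ℝ) (lam κ : ℝ)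
    (hlam : 0 < lam) (hκ0 : 0 < κ) (hκ1 : κ < 1)
    (hy : y = A.mulVec x + w) (hw : linf (A.transpose.mulVec w) ≤ κ * lam)
    (hmin : ∀ z : Fin N → ℝ,
      (1/2) * (l2 (y - A.mulVec xh))^2 + lam * l1 xh ≤
        (1/2) * (l2 (y - A.mulVec z))^2 + lam * l1 z) :
    l1 xh ≤ κ * l1 (xh - x) + l1 x :=
  stmt15_general A x xh w y lam κ hlam hy hw hmin
end
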